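/- The map G(r, v₁, v₂) := max over φ ∈ [0, 2π) of (2v₁ cos φ - (2r-1) v₂ sin φ)² / (16(1 + (2r-1) cos φ)), defined for r ∈ (0,1) and (v₁, v₂) ∈ R², is not a quadratic form in (v₁, v₂): there exist r ∈ (0,1) and v₂ ∈ R such that G(r, 1, v₂) - G(r, 1, 0) - v₂² G(r, 0, 1) is nonzero and not linear in v₂. -/
import Mathlib


open Real

noncomputable section

/-- The squared metric derivative of the qubit quantum 2-Wasserstein distance. -/
def G (r v₁ v₂ : ℝ) : ℝ :=
  sSup {y : ℝ | ∃ φ ∈ Set.Ico (0 : ℝ) (2 * Real.pi),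
    y = (2 * v₁ * Real.cos φ - (2 * r - 1) * v₂ * Real.sin φ) ^ 2
      / (16 * (1 + (2 * r - 1) * Real.cos φ))}

lemma Gset_neg_subset (r v₁ v₂ : ℝ) :
    {y : ℝ | ∃ φ ∈ Set.Ico (0 : ℝ) (2 * Real.pi),
      y = (2 * v₁ * Real.cos φ - (2 * r - 1) * v₂ * Real.sin φ) ^ 2
        / (16 * (1 + (2 * r - 1) * Real.cos φ))} ⊆
    {y : ℝ | ∃ φ ∈ Set.Ico (0 : ℝ) (2 * Real.pi),
      y = (2 * v₁ * Real.cos φ - (2 * r - 1) * (-v₂) * Real.sin φ) ^ 2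
        / (16 * (1 + (2 * r - 1) * Real.cos φ))} := by
  rintro y ⟨φ, ⟨h0, h2⟩, rfl⟩
  by_cases hφ : φ = 0
  · exact ⟨0, ⟨le_refl 0, by positivity⟩, by simp [hφ]⟩
  · refine ⟨2 * Real.pi - φ, ⟨by linarith, by
      have : 0 < φ := lt_of_le_of_ne h0 (Ne.symm hφ); linarith⟩, ?_⟩
    have hc : Real.cos (2 * Real.pi - φ) = Real.cos φ := by
      rw [Real.cos_sub]; simp
    have hs : Real.sin (2 * Real.pi - φ) = - Real.sin φ := by
      rw [Real.sin_sub]; simp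
    rw [hc, hs]; ring_nf

lemma G_even (r v₁ v₂ : ℝ) : G r v₁ v₂ = G r v₁ (-v₂) := by
  unfold G
  congr 1
  apply Set.Subset.antisymm (Gset_neg_subset r v₁ v₂)
  have := Gset_neg_subset r v₁ (-v₂)
  rwa [neg_neg] at this

lemma G_r10 : G (4/5) 1 0 = 5/8 := by
  unfold G
  have hub : ∀ y ∈ {y : ℝ | ∃ φ ∈ Set.Ico (0 : ℝ) (2 * Real.pi),
      y = (2 * 1 * Real.cos φ - (2 * (4/5) - 1) * 0 * Real.sin φ) ^ 2
        / (16 * (1 + (2 * (4/5) - 1) * Real.cos φ))}, y ≤ 5/8 := by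
    rintro y ⟨φ, _, rfl⟩
    have hc1 := Real.neg_one_le_cos φ
    have hc2 := Real.cos_le_one φ
    have hd : (0:ℝ) < 16 * (1 + (2 * (4/5:ℝ) - 1) * Real.cos φ) := by nlinarith
    rw [div_le_iff₀ hd]
    nlinarith
  have hmem : (5/8 : ℝ) ∈ {y : ℝ | ∃ φ ∈ Set.Ico (0 : ℝ) (2 * Real.pi),
      y = (2 * 1 * Real.cos φ - (2 * (4/5) - 1) * 0 * Real.sin φ) ^ 2
        / (16 * (1 + (2 * (4/5) - 1) * Real.cos φ))} := by
    refine ⟨Real.pi, ⟨Real.pi_nonneg, by linarith [Real.pi_pos]⟩, ?_⟩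
    rw [Real.cos_pi]; norm_num
  exact le_antisymm (csSup_le ⟨5/8, hmem⟩ hub) (le_csSup ⟨5/8, hub⟩ hmem)

lemma G_r01 : G (4/5) 0 1 = 1/40 := by
  unfold G
  have hub : ∀ y ∈ {y : ℝ | ∃ φ ∈ Set.Ico (0 : ℝ) (2 * Real.pi),
      y = (2 * 0 * Real.cos φ - (2 * (4/5) - 1) * 1 * Real.sin φ) ^ 2
        / (16 * (1 + (2 * (4/5) - 1) * Real.cos φ))}, y ≤ 1/40 := by
    rintro y ⟨φ, _, rfl⟩
    have hc1 := Real.neg_one_le_cos φ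
    have hc2 := Real.cos_le_one φ
    have hsc := Real.sin_sq_add_cos_sq φ
    have hd : (0:ℝ) < 16 * (1 + (2 * (4/5:ℝ) - 1) * Real.cos φ) := by nlinarith
    rw [div_le_iff₀ hd]
    nlinarith [sq_nonneg (3 * Real.cos φ + 1)]
  have hmem : (1/40 : ℝ) ∈ {y : ℝ | ∃ φ ∈ Set.Ico (0 : ℝ) (2 * Real.pi),
      y = (2 * 0 * Real.cos φ - (2 * (4/5) - 1) * 1 * Real.sin φ) ^ 2
        / (16 * (1 + (2 * (4/5) - 1) * Real.cos φ))} := by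
    refine ⟨Real.arccos (-1/3), ⟨Real.arccos_nonneg _, ?_⟩, ?_⟩
    · have := Real.arccos_le_pi (-1/3)
      linarith [Real.pi_pos]
    · have hc : Real.cos (Real.arccos (-1/3)) = -1/3 :=
        Real.cos_arccos (by norm_num) (by norm_num)
      have hs : Real.sin (Real.arccos (-1/3)) ^ 2 = 8/9 := by
        rw [Real.sin_arccos, Real.sq_sqrt (by norm_num)]; norm_num
      rw [hc, eq_div_iff (by norm_num)]
      linear_combination (-9/25) * hs
  exact le_antisymm (csSup_le ⟨1/40, hmem⟩ hub) (le_csSup ⟨1/40, hub⟩ hmem)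

lemma G_r15 : G (4/5) 1 5 ≥ 81/64 := by
  unfold G
  have hub : ∀ y ∈ {y : ℝ | ∃ φ ∈ Set.Ico (0 : ℝ) (2 * Real.pi),
      y = (2 * 1 * Real.cos φ - (2 * (4/5) - 1) * 5 * Real.sin φ) ^ 2
        / (16 * (1 + (2 * (4/5) - 1) * Real.cos φ))}, y ≤ 65/32 := by
    rintro y ⟨φ, _, rfl⟩
    have hc1 := Real.neg_one_le_cos φ
    have hc2 := Real.cos_le_one φ
    have hsc := Real.sin_sq_add_cos_sq φ
    have hd : (0:ℝ) < 16 * (1 + (2 * (4/5:ℝ) - 1) * Real.cos φ) := by nlinarith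
    rw [div_le_iff₀ hd]
    nlinarith [sq_nonneg (2 * Real.sin φ + 3 * Real.cos φ),
      sq_nonneg (Real.cos φ + 1), sq_nonneg (Real.sin φ)]
  have hmem : (81/64 : ℝ) ∈ {y : ℝ | ∃ φ ∈ Set.Ico (0 : ℝ) (2 * Real.pi),
      y = (2 * 1 * Real.cos φ - (2 * (4/5) - 1) * 5 * Real.sin φ) ^ 2
        / (16 * (1 + (2 * (4/5) - 1) * Real.cos φ))} := by
    refine ⟨Real.arccos (-3/5), ⟨Real.arccos_nonneg _, ?_⟩, ?_⟩
    · have := Real.arccos_le_pi (-3/5)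
      linarith [Real.pi_pos]
    · have hc : Real.cos (Real.arccos (-3/5)) = -3/5 :=
        Real.cos_arccos (by norm_num) (by norm_num)
      have hs : Real.sin (Real.arccos (-3/5)) = 4/5 := by
        rw [Real.sin_arccos, show (1 - (-3/5:ℝ)^2) = (4/5)^2 by norm_num,
          Real.sqrt_sq (by norm_num)]
      rw [hc, hs]; norm_num
  exact le_csSup ⟨65/32, hub⟩ hmem

theorem G_not_quadratic :
    ∃ r ∈ Set.Ioo (0 : ℝ) 1,
      (∃ v₂ : ℝ, G r 1 v₂ - G r 1 0 - v₂ ^ 2 * G r 0 1 ≠ 0) ∧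
        ¬ ∃ a b : ℝ, ∀ v₂ : ℝ, G r 1 v₂ - G r 1 0 - v₂ ^ 2 * G r 0 1 = a * v₂ + b := by
  refine ⟨4/5, by norm_num, ⟨5, ?_⟩, ?_⟩
  · rw [G_r10, G_r01]
    have := G_r15
    intro h
    nlinarith
  · rintro ⟨a, b, hab⟩
    have e0 := hab 0
    have e5 := hab 5
    have em5 := hab (-5)
    rw [G_even (4/5) 1 5] at e5
    rw [G_r10, G_r01] at e0 e5 em5
    have h15 := G_r15
    rw [G_even (4/5) 1 5] at h15
    nlinarith
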